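/- arXiv:2603.21916 — 2 statements merged into one kernel-verified Lean document; each statement's English description precedes it below -/
import Mathlib

section
/- Let A ∈ ℝ^{K×d}, let Γ ∈ ℝ^{K×K} and C₀ ∈ ℝ^{d×d} be symmetric positive definite, let R: ℝ^d → (-∞,∞] be proper, closed, convex, lower semicontinuous with inf R > -∞, and let (x^{(j)}(t), t ≥ 0)_{j=1,…,J} and (z^{(j)}(t), t ≥ 0)_{j=1,…,J} be two solutions of the linear SEKI flow whose initial ensembles have equal positive definite empirical covariances: (1/J)∑_j (x₀^{(j)} − x̄₀)(x₀^{(j)} − x̄₀)ᵀ = (1/J)∑_j (z₀^{(j)} − z̄₀)(z₀^{(j)} − z̄₀)ᵀ. Then for all t ≥ 0 the empirical covariances coincide, C^x(t) = C^z(t) =: C(t), and the ensemble means satisfy the contraction estimate ‖x̄(t) − z̄(t)‖_{C(t)} ≤ ‖x̄₀ − z̄₀‖_{C(0)}, where ‖v‖_C := √(vᵀC⁻¹v). -/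
open Matrix MeasureTheory RealInnerProductSpace Filter

noncomputable section

/-- Matrix–vector multiplication, viewed as a map on Euclidean spaces. -/
def mulVecE {m n : ℕ} (M : Matrix (Fin m) (Fin n) ℝ) (v : EuclideanSpace ℝ (Fin n)) :
    EuclideanSpace ℝ (Fin m) :=
  WithLp.toLp 2 (fun i => ∑ j, M i j * v j)

/-- Ensemble mean `x̄ = (1/J) ∑ⱼ x⁽ʲ⁾`. -/
def emean {d J : ℕ} (x : Fin J → EuclideanSpace ℝ (Fin d)) : EuclideanSpace ℝ (Fin d) :=
  (J : ℝ)⁻¹ • ∑ j, x j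

/-- Empirical covariance `C(x) = (1/J) ∑ⱼ (x⁽ʲ⁾ - x̄)(x⁽ʲ⁾ - x̄)ᵀ`. -/
def ecov {d J : ℕ} (x : Fin J → EuclideanSpace ℝ (Fin d)) : Matrix (Fin d) (Fin d) ℝ :=
  (J : ℝ)⁻¹ • ∑ j, vecMulVec (fun i => (x j - emean x) i) (fun i => (x j - emean x) i)

/-- Convex subdifferential `∂R(x) = {ξ | ∀ z, R z ≥ R x + ⟪ξ, z - x⟫}`. -/
def subderiv {d : ℕ} (R : EuclideanSpace ℝ (Fin d) → ℝ) (x : EuclideanSpace ℝ (Fin d)) :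
    Set (EuclideanSpace ℝ (Fin d)) :=
  {ξ | ∀ z, R x + ⟪ξ, z - x⟫ ≤ R z}

/-- Squared weighted norm `‖v‖_C² = vᵀ C⁻¹ v`. -/
def wnormSq {d : ℕ} (C : Matrix (Fin d) (Fin d) ℝ) (v : EuclideanSpace ℝ (Fin d)) : ℝ :=
  ⟪v, mulVecE C⁻¹ v⟫

/-- Smallest eigenvalue of a symmetric matrix, via the Rayleigh quotient. -/
def lamMin {d : ℕ} (C : Matrix (Fin d) (Fin d) ℝ) : ℝ :=
  ⨅ v : {v : EuclideanSpace ℝ (Fin d) // ‖v‖ = 1}, ⟪mulVecE C v.1, v.1⟫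

/-- Largest eigenvalue of a symmetric matrix, via the Rayleigh quotient. -/
def lamMax {d : ℕ} (C : Matrix (Fin d) (Fin d) ℝ) : ℝ :=
  ⨆ v : {v : EuclideanSpace ℝ (Fin d) // ‖v‖ = 1}, ⟪mulVecE C v.1, v.1⟫

end

/-- A solution of the linear SEKI flow on `[0,∞)` (absolutely continuous trajectories with
a measurable selection `w(t) ∈ ∂R(x̄(t))`, written in integral form). -/
def IsSEKISolInf {d K J : ℕ} (A : Matrix (Fin K) (Fin d) ℝ) (Γ : Matrix (Fin K) (Fin K) ℝ)
    (C0 : Matrix (Fin d) (Fin d) ℝ) (y : EuclideanSpace ℝ (Fin K))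
    (R : EuclideanSpace ℝ (Fin d) → ℝ)
    (x : Fin J → ℝ → EuclideanSpace ℝ (Fin d)) : Prop :=
  (∀ j, ContinuousOn (x j) (Set.Ici 0)) ∧
  ∃ w : ℝ → EuclideanSpace ℝ (Fin d),
    (∀ T : ℝ, 0 ≤ T → IntervalIntegrable w MeasureTheory.volume 0 T) ∧
    (∀ᵐ s ∂(MeasureTheory.volume.restrict (Set.Ici (0 : ℝ))),
      w s ∈ subderiv R (emean (fun j => x j s))) ∧
    (∀ t : ℝ, 0 ≤ t →
      emean (fun j => x j t) = emean (fun j => x j 0) +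
        ∫ s in (0 : ℝ)..t,
          -(mulVecE (ecov (fun j => x j s))
            (mulVecE (Aᵀ * Γ⁻¹) (mulVecE A (emean (fun j => x j s)) - y) +
              mulVecE C0⁻¹ (emean (fun j => x j s)) + w s))) ∧
    (∀ j, ∀ t : ℝ, 0 ≤ t →
      x j t - emean (fun j' => x j' t) = x j 0 - emean (fun j' => x j' 0) +
        ∫ s in (0 : ℝ)..t,
          -(mulVecE (ecov (fun j' => x j' s) * (Aᵀ * Γ⁻¹ * A + C0⁻¹))
              (x j s - emean (fun j' => x j' s))))

/-!
The covariance obeys the Riccati equation `C' = -2 C B C` with `B = AᵀΓ⁻¹A + C₀⁻¹`, because every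
deviation solves `e' = -C B e`. Hence `Δ = 1 - (C(0)⁻¹ + 2tB) C(t)` solves the linear equation
`Δ' = -2 Δ B C` with `Δ(0) = 0`, so `Δ ≡ 0` by Gronwall: `C(t)⁻¹ = C(0)⁻¹ + 2tB` for every solution,
and two solutions with the same initial covariance keep the same covariance.

The difference `u = x̄ - z̄` of the means then solves `u' = -C (B u + δ)`, where `δ = ξ - η` is a
difference of subgradients of `R` at `x̄` and `z̄`, so `⟪δ, u⟫ ≥ 0`. Along this flow
`d/dt ⟪u, C⁻¹ u⟫ = 2 ⟪u', C⁻¹ u⟫ + ⟪u, 2B u⟫ = -2 ⟪δ, u⟫ ≤ 0`.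
The trajectories are only absolutely continuous, so the chain rule is applied in integrated form,
through the fundamental theorem of calculus for absolutely continuous functions.
-/

noncomputable section

open Set intervalIntegral
open scoped Interval Matrix.Norms.L2Operator

section MulVecE

variable {l m n : ℕ}

theorem mulVecE_eq_toEuclideanLin (M : Matrix (Fin m) (Fin n) ℝ) (v : EuclideanSpace ℝ (Fin n)) :
    mulVecE M v = Matrix.toEuclideanLin M v := rfl

theorem mulVecE_add (M : Matrix (Fin m) (Fin n) ℝ) (v w : EuclideanSpace ℝ (Fin n)) :
    mulVecE M (v + w) = mulVecE M v + mulVecE M w :=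
  map_add (Matrix.toEuclideanLin M) v w

theorem mulVecE_sub (M : Matrix (Fin m) (Fin n) ℝ) (v w : EuclideanSpace ℝ (Fin n)) :
    mulVecE M (v - w) = mulVecE M v - mulVecE M w :=
  map_sub (Matrix.toEuclideanLin M) v w

theorem add_mulVecE (M N : Matrix (Fin m) (Fin n) ℝ) (v : EuclideanSpace ℝ (Fin n)) :
    mulVecE (M + N) v = mulVecE M v + mulVecE N v := by
  simp [mulVecE_eq_toEuclideanLin]

theorem smul_mulVecE (c : ℝ) (M : Matrix (Fin m) (Fin n) ℝ) (v : EuclideanSpace ℝ (Fin n)) :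
    mulVecE (c • M) v = c • mulVecE M v := by
  simp [mulVecE_eq_toEuclideanLin]

theorem one_mulVecE (v : EuclideanSpace ℝ (Fin n)) : mulVecE 1 v = v := by
  simp [mulVecE_eq_toEuclideanLin]

theorem mulVecE_mulVecE (M : Matrix (Fin l) (Fin m) ℝ) (N : Matrix (Fin m) (Fin n) ℝ)
    (v : EuclideanSpace ℝ (Fin n)) : mulVecE M (mulVecE N v) = mulVecE (M * N) v := by
  simp [mulVecE_eq_toEuclideanLin]

theorem inner_mulVecE_left (M : Matrix (Fin m) (Fin n) ℝ) (v : EuclideanSpace ℝ (Fin n))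
    (w : EuclideanSpace ℝ (Fin m)) : ⟪mulVecE M v, w⟫ = ⟪v, mulVecE Mᵀ w⟫ := by
  simp [mulVecE_eq_toEuclideanLin, EuclideanSpace.inner_eq_star_dotProduct, Matrix.toLpLin_apply,
    Matrix.dotProduct_mulVec, Matrix.vecMul_transpose, dotProduct_comm]

end MulVecE

section Bilinear

variable {M N P : Type*} [NormedAddCommGroup M] [NormedSpace ℝ M] [NormedAddCommGroup N]
  [NormedSpace ℝ N] [NormedAddCommGroup P] [NormedSpace ℝ P]

def LinearMap.toContinuousBilinear [FiniteDimensional ℝ M] [FiniteDimensional ℝ N]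
    (B : M →ₗ[ℝ] N →ₗ[ℝ] P) : M →L[ℝ] N →L[ℝ] P :=
  LinearMap.toContinuousLinearMap (LinearMap.toContinuousLinearMap.toLinearMap ∘ₗ B)

theorem ContinuousLinearMap.intervalIntegrable_comp (L : M →L[ℝ] N) {f : ℝ → M} {a b : ℝ}
    (hf : IntervalIntegrable f volume a b) : IntervalIntegrable (fun s => L (f s)) volume a b :=
  ⟨L.integrable_comp hf.1, L.integrable_comp hf.2⟩

theorem ContinuousLinearMap.intervalIntegrable_of_continuousOn_left (B : M →L[ℝ] N →L[ℝ] P)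
    {φ : ℝ → M} {w : ℝ → N} {a b : ℝ} (hφ : ContinuousOn φ (uIcc a b))
    (hw : IntervalIntegrable w volume a b) :
    IntervalIntegrable (fun s => B (φ s) (w s)) volume a b := by
  rw [intervalIntegrable_iff] at hw ⊢
  obtain ⟨K, hK⟩ := isCompact_uIcc.exists_bound_of_continuousOn hφ
  exact B.integrable_of_bilin_of_bdd_left K
    ((hφ.mono uIoc_subset_uIcc).aestronglyMeasurable measurableSet_uIoc)
    (ae_restrict_of_forall_mem measurableSet_uIoc fun s hs => hK s (uIoc_subset_uIcc hs)) hw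

theorem IntervalIntegrable.inner_continuousOn {E : Type*} [NormedAddCommGroup E]
    [InnerProductSpace ℝ E] {g v : ℝ → E} {a b : ℝ} (hg : IntervalIntegrable g volume a b)
    (hv : ContinuousOn v (uIcc a b)) : IntervalIntegrable (fun s => ⟪g s, v s⟫) volume a b :=
  (innerSL ℝ).flip.intervalIntegrable_of_continuousOn_left hv hg

end Bilinear

section MulVecCLM

variable {m n : ℕ}

def mulVecCLM₂ :
    Matrix (Fin m) (Fin n) ℝ →L[ℝ] EuclideanSpace ℝ (Fin n) →L[ℝ] EuclideanSpace ℝ (Fin m) :=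
  (Matrix.toEuclideanLin : Matrix (Fin m) (Fin n) ℝ ≃ₗ[ℝ] _).toLinearMap.toContinuousBilinear

@[simp] theorem mulVecCLM₂_apply (M : Matrix (Fin m) (Fin n) ℝ) (v : EuclideanSpace ℝ (Fin n)) :
    mulVecCLM₂ M v = mulVecE M v := rfl

def vecMulVecCLM₂ :
    EuclideanSpace ℝ (Fin m) →L[ℝ] EuclideanSpace ℝ (Fin n) →L[ℝ] Matrix (Fin m) (Fin n) ℝ :=
  ((vecMulVecBilin ℝ ℝ).compl₁₂ (WithLp.linearEquiv 2 ℝ (Fin m → ℝ)).toLinearMap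
    (WithLp.linearEquiv 2 ℝ (Fin n → ℝ)).toLinearMap).toContinuousBilinear

@[simp] theorem vecMulVecCLM₂_apply (v : EuclideanSpace ℝ (Fin m)) (w : EuclideanSpace ℝ (Fin n)) :
    vecMulVecCLM₂ v w = vecMulVec (fun i => v i) (fun i => w i) := rfl

end MulVecCLM

section ProductRule

variable {a b : ℝ}

theorem absolutelyContinuousOnInterval_const_add_primitive {α : ℝ → ℝ}
    (hα : IntervalIntegrable α volume a b) (p : ℝ) :
    AbsolutelyContinuousOnInterval (fun t => p + ∫ r in a..t, α r) a b :=
  (LipschitzWith.const p).lipschitzOnWith.absolutelyContinuousOnInterval.fun_add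
    (hα.absolutelyContinuousOnInterval_intervalIntegral left_mem_uIcc)

theorem IntervalIntegrable.ae_deriv_const_add_primitive {α : ℝ → ℝ}
    (hα : IntervalIntegrable α volume a b) (p : ℝ) :
    ∀ᵐ s, s ∈ Ι a b → deriv (fun t => p + ∫ r in a..t, α r) s = α s := by
  filter_upwards [hα.ae_hasDerivAt_integral] with s hs hmem
  exact ((hs (uIoc_subset_uIcc hmem) a left_mem_uIcc).const_add p).deriv

theorem integral_mul_add_mul_eq_sub_of_primitive {F G α β : ℝ → ℝ}
    (hα : IntervalIntegrable α volume a b) (hβ : IntervalIntegrable β volume a b)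
    (hF : ∀ t ∈ uIcc a b, F t = F a + ∫ r in a..t, α r)
    (hG : ∀ t ∈ uIcc a b, G t = G a + ∫ r in a..t, β r) :
    ∫ s in a..b, (α s * G s + F s * β s) = F b * G b - F a * G a := by
  have hprod :=
    (absolutelyContinuousOnInterval_const_add_primitive hα (F a)).integral_deriv_mul_eq_sub
      (absolutelyContinuousOnInterval_const_add_primitive hβ (G a))
  simp only [integral_same, add_zero] at hprod
  rw [hF b right_mem_uIcc, hG b right_mem_uIcc, ← hprod]
  apply intervalIntegral.integral_congr_ae
  filter_upwards [hα.ae_deriv_const_add_primitive (F a), hβ.ae_deriv_const_add_primitive (G a)]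
    with s hαs hβs hmem
  rw [hαs hmem, hβs hmem, hF s (uIoc_subset_uIcc hmem), hG s (uIoc_subset_uIcc hmem)]

theorem continuousOn_of_primitive {E : Type*} [NormedAddCommGroup E] [NormedSpace ℝ E]
    {u g : ℝ → E} (hg : IntervalIntegrable g volume a b)
    (hu : ∀ t ∈ uIcc a b, u t = u a + ∫ r in a..t, g r) :
    ContinuousOn u (uIcc a b) :=
  ((continuousOn_primitive_interval' hg left_mem_uIcc).const_add (u a)).congr hu

variable {ι : Type*} [Fintype ι]

theorem apply_eq_of_primitive {u g : ℝ → EuclideanSpace ℝ ι}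
    (hg : IntervalIntegrable g volume a b) (hu : ∀ t ∈ uIcc a b, u t = u a + ∫ r in a..t, g r)
    (i : ι) : ∀ t ∈ uIcc a b, u t i = u a i + ∫ r in a..t, g r i := by
  intro t ht
  rw [hu t ht, PiLp.add_apply]
  congr 1
  exact ((EuclideanSpace.proj i).intervalIntegral_comp_comm
    (hg.mono_set (uIcc_subset_uIcc left_mem_uIcc ht))).symm

theorem integral_inner_add_inner_eq_sub_of_primitive {u v g h : ℝ → EuclideanSpace ℝ ι}
    (hg : IntervalIntegrable g volume a b) (hh : IntervalIntegrable h volume a b)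
    (hu : ∀ t ∈ uIcc a b, u t = u a + ∫ r in a..t, g r)
    (hv : ∀ t ∈ uIcc a b, v t = v a + ∫ r in a..t, h r) :
    ∫ s in a..b, (⟪g s, v s⟫ + ⟪u s, h s⟫) = ⟪u b, v b⟫ - ⟪u a, v a⟫ := by
  have hcoord : ∀ {w f : ℝ → EuclideanSpace ℝ ι}, IntervalIntegrable f volume a b →
      (∀ t ∈ uIcc a b, w t = w a + ∫ r in a..t, f r) → ∀ i,
      IntervalIntegrable (fun s => f s i) volume a b ∧
      ContinuousOn (fun s => w s i) (uIcc a b) := fun hf hw i =>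
    ⟨(EuclideanSpace.proj i).intervalIntegrable_comp hf,
      (EuclideanSpace.proj i).continuous.comp_continuousOn (continuousOn_of_primitive hf hw)⟩
  simp only [PiLp.inner_apply, RCLike.inner_apply, conj_trivial, ← Finset.sum_add_distrib,
    ← Finset.sum_sub_distrib]
  rw [integral_finsetSum fun i _ => ((hcoord hg hu i).1.continuousOn_mul (hcoord hh hv i).2).add
    ((hcoord hh hv i).1.mul_continuousOn (hcoord hg hu i).2)]
  refine Finset.sum_congr rfl fun i _ => ?_
  rw [← integral_mul_add_mul_eq_sub_of_primitive (hcoord hh hv i).1 (hcoord hg hu i).1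
    (apply_eq_of_primitive hh hv i) (apply_eq_of_primitive hg hu i)]
  exact integral_congr fun s _ => add_comm _ _

end ProductRule

section QuadraticForm

variable {d : ℕ} {a b : ℝ} {u g : ℝ → EuclideanSpace ℝ (Fin d)}

theorem integral_two_inner_mulVecE_eq_sub_of_primitive {M : Matrix (Fin d) (Fin d) ℝ}
    (hM : M.IsSymm) (hg : IntervalIntegrable g volume a b)
    (hu : ∀ t ∈ uIcc a b, u t = u a + ∫ r in a..t, g r) :
    ∫ s in a..b, 2 * ⟪g s, mulVecE M (u s)⟫ =
      ⟪u b, mulVecE M (u b)⟫ - ⟪u a, mulVecE M (u a)⟫ := by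
  have hMu : ∀ t ∈ uIcc a b,
      mulVecE M (u t) = mulVecE M (u a) + ∫ r in a..t, mulVecE M (g r) := by
    intro t ht
    rw [hu t ht, mulVecE_add]
    exact congrArg _ ((mulVecCLM₂ M).intervalIntegral_comp_comm
      (hg.mono_set (uIcc_subset_uIcc left_mem_uIcc ht))).symm
  rw [← integral_inner_add_inner_eq_sub_of_primitive hg
    ((mulVecCLM₂ M).intervalIntegrable_comp hg) hu hMu]
  refine integral_congr fun s _ => ?_
  simp only [mulVecCLM₂_apply]
  rw [← real_inner_comm (u s), inner_mulVecE_left, hM.eq]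
  ring

theorem inner_mulVecE_affine_sub_eq_integral {Q₀ Q₁ : Matrix (Fin d) (Fin d) ℝ}
    (hQ₀ : Q₀.IsSymm) (hQ₁ : Q₁.IsSymm) (hg : IntervalIntegrable g volume a b)
    (hu : ∀ t ∈ uIcc a b, u t = u a + ∫ r in a..t, g r) :
    ⟪u b, mulVecE (Q₀ + b • Q₁) (u b)⟫ - ⟪u a, mulVecE (Q₀ + a • Q₁) (u a)⟫ =
      ∫ s in a..b, (2 * ⟪g s, mulVecE (Q₀ + s • Q₁) (u s)⟫ + ⟪u s, mulVecE Q₁ (u s)⟫) := by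
  have hu_cont := continuousOn_of_primitive hg hu
  have hMu_cont : ∀ M : Matrix (Fin d) (Fin d) ℝ,
      ContinuousOn (fun s => mulVecE M (u s)) (uIcc a b) :=
    fun M => (mulVecCLM₂ M).continuous.comp_continuousOn hu_cont
  have hβ : IntervalIntegrable (fun s => 2 * ⟪g s, mulVecE Q₁ (u s)⟫) volume a b :=
    (hg.inner_continuousOn (hMu_cont Q₁)).const_mul 2
  have hq₁ : ∀ t ∈ uIcc a b, ⟪u t, mulVecE Q₁ (u t)⟫ =
      ⟪u a, mulVecE Q₁ (u a)⟫ + ∫ r in a..t, 2 * ⟪g r, mulVecE Q₁ (u r)⟫ := by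
    intro t ht
    have hsub : uIcc a t ⊆ uIcc a b := uIcc_subset_uIcc left_mem_uIcc ht
    rw [integral_two_inner_mulVecE_eq_sub_of_primitive hQ₁ (hg.mono_set hsub)
      fun s hs => hu s (hsub hs)]
    ring
  have htime := integral_mul_add_mul_eq_sub_of_primitive (F := fun s => s) (α := fun _ => 1)
    intervalIntegrable_const hβ (fun t _ => by simp) hq₁
  calc ⟪u b, mulVecE (Q₀ + b • Q₁) (u b)⟫ - ⟪u a, mulVecE (Q₀ + a • Q₁) (u a)⟫
      = (⟪u b, mulVecE Q₀ (u b)⟫ - ⟪u a, mulVecE Q₀ (u a)⟫) +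
          (b * ⟪u b, mulVecE Q₁ (u b)⟫ - a * ⟪u a, mulVecE Q₁ (u a)⟫) := by
        simp only [add_mulVecE, smul_mulVecE, inner_add_right, real_inner_smul_right]
        ring
    _ = (∫ s in a..b, 2 * ⟪g s, mulVecE Q₀ (u s)⟫) +
          ∫ s in a..b, (1 * ⟪u s, mulVecE Q₁ (u s)⟫ + s * (2 * ⟪g s, mulVecE Q₁ (u s)⟫)) := by
        rw [integral_two_inner_mulVecE_eq_sub_of_primitive hQ₀ hg hu, htime]
    _ = _ := by
        rw [← integral_add ((hg.inner_continuousOn (hMu_cont Q₀)).const_mul 2)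
          (((hu_cont.inner (hMu_cont Q₁)).intervalIntegrable.const_mul 1).add
            (hβ.continuousOn_mul (continuousOn_id' _)))]
        refine integral_congr fun s _ => ?_
        simp only [add_mulVecE, smul_mulVecE, inner_add_right, real_inner_smul_right]
        ring

end QuadraticForm

theorem wnormSq_le_of_flow {d : ℕ} {Q₀ B : Matrix (Fin d) (Fin d) ℝ} (hQ₀ : Q₀.IsSymm)
    (hB : B.IsSymm) {C : ℝ → Matrix (Fin d) (Fin d) ℝ} (hC : ContinuousOn C (Ici 0))
    (hC_symm : ∀ s, (C s).IsSymm) (hQC : ∀ s, 0 ≤ s → (Q₀ + (2 * s) • B) * C s = 1)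
    {u δ : ℝ → EuclideanSpace ℝ (Fin d)} (hu_cont : ContinuousOn u (Ici 0))
    (hu : ∀ t, 0 ≤ t → u t = u 0 + ∫ s in (0 : ℝ)..t, -(mulVecE (C s) (mulVecE B (u s) + δ s)))
    (hδ : ∀ᵐ s ∂volume.restrict (Ici 0), 0 ≤ ⟪δ s, u s⟫) {t : ℝ} (ht : 0 ≤ t)
    (hδ_int : IntervalIntegrable δ volume 0 t) :
    wnormSq (C t) (u t) ≤ wnormSq (C 0) (u 0) := by
  have hsub : uIcc 0 t ⊆ Ici 0 := by rw [uIcc_of_le ht]; exact Icc_subset_Ici_self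
  have hg : IntervalIntegrable (fun s => -(mulVecE (C s) (mulVecE B (u s) + δ s))) volume 0 t :=
    (mulVecCLM₂.intervalIntegrable_of_continuousOn_left (hC.mono hsub)
      ((((mulVecCLM₂ B).continuous.comp_continuousOn hu_cont).mono hsub).intervalIntegrable.add
        hδ_int)).neg
  have hweight : ∀ s : ℝ, Q₀ + (2 * s) • B = Q₀ + s • (2 : ℝ) • B := fun s => by
    rw [smul_smul, mul_comm]
  have hC_inv : ∀ s, 0 ≤ s → (C s)⁻¹ = Q₀ + s • (2 : ℝ) • B := fun s hs => by
    rw [Matrix.inv_eq_left_inv (hQC s hs), hweight]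
  have key := inner_mulVecE_affine_sub_eq_integral hQ₀ (hB.smul (2 : ℝ)) hg
    fun s hs => hu s (hsub hs).out
  rw [zero_smul, add_zero] at key
  rw [wnormSq, wnormSq, hC_inv t ht, hC_inv 0 le_rfl, zero_smul, add_zero, ← sub_nonpos, key,
    integral_of_le ht]
  refine integral_nonpos_of_ae ?_
  filter_upwards [ae_restrict_of_ae_restrict_of_subset
    (Ioc_subset_Icc_self.trans Icc_subset_Ici_self) hδ, ae_restrict_mem measurableSet_Ioc]
    with s hδs hs
  have hCQ : C s * (Q₀ + s • (2 : ℝ) • B) = 1 := by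
    rw [← hweight]
    exact mul_eq_one_comm.mp (hQC s hs.1.le)
  -- `Cᵀ (C⁻¹ u) = u` turns the first term into `-2 ⟪B u + δ, u⟫`
  simp only [Pi.zero_apply, inner_neg_left, inner_mulVecE_left, (hC_symm s).eq, mulVecE_mulVecE,
    hCQ, one_mulVecE, inner_add_left, smul_mulVecE, real_inner_smul_right,
    real_inner_comm (u s) (mulVecE B (u s))]
  linarith

theorem eq_zero_of_hasDerivWithinAt_mul_right {𝔸 : Type*} [NormedRing 𝔸] [NormedSpace ℝ 𝔸]
    {Δ N : ℝ → 𝔸} {a b : ℝ} (hΔ : ContinuousOn Δ (Icc a b)) (hN : ContinuousOn N (Icc a b))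
    (hderiv : ∀ t ∈ Ico a b, HasDerivWithinAt Δ (Δ t * N t) (Ici t) t) (ha : Δ a = 0) :
    ∀ t ∈ Icc a b, Δ t = 0 := by
  obtain ⟨K, hK⟩ := isCompact_Icc.exists_bound_of_continuousOn hN
  have hbound : ∀ s ∈ Ico a b, ‖Δ s * N s‖ ≤ K * ‖Δ s‖ + 0 := fun s hs =>
    calc ‖Δ s * N s‖ ≤ ‖Δ s‖ * ‖N s‖ := norm_mul_le _ _
      _ ≤ K * ‖Δ s‖ + 0 := by
        rw [add_zero, mul_comm]
        exact mul_le_mul_of_nonneg_right (hK s (Ico_subset_Icc_self hs)) (norm_nonneg _)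
  intro t ht
  have := norm_le_gronwallBound_of_norm_deriv_right_le hΔ hderiv (by rw [ha, norm_zero]) hbound t ht
  rwa [gronwallBound_ε0_δ0, norm_le_zero_iff] at this

theorem hasDerivWithinAt_Ici_of_primitive {E : Type*} [NormedAddCommGroup E] [NormedSpace ℝ E]
    [CompleteSpace E] {f φ : ℝ → E} (hφ : ContinuousOn φ (Ici 0))
    (hf : ∀ t, 0 ≤ t → f t = f 0 + ∫ s in (0 : ℝ)..t, φ s) {t : ℝ} (ht : 0 ≤ t) :
    HasDerivWithinAt f (φ t) (Ici t) t := by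
  have hIoi : Ioi t ⊆ Ici 0 := fun s hs => ht.trans hs.le
  have hint : IntervalIntegrable φ volume 0 t :=
    (hφ.mono (uIcc_of_le ht ▸ Icc_subset_Ici_self)).intervalIntegrable
  have hFTC := integral_hasDerivWithinAt_right hint (s := Ici t) (t := Ioi t)
    ⟨Ici 0, mem_of_superset self_mem_nhdsWithin hIoi, hφ.aestronglyMeasurable measurableSet_Ici⟩
    ((hφ t ht).mono hIoi)
  exact (hFTC.const_add (f 0)).congr (fun s hs => hf s (ht.trans hs)) (hf t ht)

section Ensemble

variable {d J : ℕ}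

theorem vecMulVecCLM₂_mulVecE_left (M : Matrix (Fin d) (Fin d) ℝ)
    (v w : EuclideanSpace ℝ (Fin d)) :
    vecMulVecCLM₂ (mulVecE M v) w = M * vecMulVecCLM₂ v w :=
  (mul_vecMulVec M _ _).symm

theorem vecMulVecCLM₂_mulVecE_right (M : Matrix (Fin d) (Fin d) ℝ)
    (v w : EuclideanSpace ℝ (Fin d)) :
    vecMulVecCLM₂ v (mulVecE M w) = vecMulVecCLM₂ v w * Mᵀ := by
  simp only [vecMulVecCLM₂_apply, vecMulVec_mul, vecMul_transpose]
  rfl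

theorem ecov_eq_sum_vecMulVecCLM₂ (v : Fin J → EuclideanSpace ℝ (Fin d)) :
    ecov v = (J : ℝ)⁻¹ • ∑ j, vecMulVecCLM₂ (v j - emean v) (v j - emean v) := rfl

theorem ecov_isSymm (v : Fin J → EuclideanSpace ℝ (Fin d)) : (ecov v).IsSymm := by
  simp [Matrix.IsSymm, ecov, Matrix.transpose_sum, transpose_vecMulVec]

variable {x : Fin J → ℝ → EuclideanSpace ℝ (Fin d)}

theorem continuousOn_emean {S : Set ℝ} (hx : ∀ j, ContinuousOn (x j) S) :
    ContinuousOn (fun t => emean fun j => x j t) S :=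
  (continuousOn_finsetSum _ fun j _ => hx j).const_smul ((J : ℝ)⁻¹)

theorem continuousOn_ecov {S : Set ℝ} (hx : ∀ j, ContinuousOn (x j) S) :
    ContinuousOn (fun t => ecov fun j => x j t) S := by
  simp only [ecov_eq_sum_vecMulVecCLM₂]
  have he : ∀ j, ContinuousOn (fun t => x j t - emean fun j => x j t) S :=
    fun j => (hx j).sub (continuousOn_emean hx)
  exact (continuousOn_finsetSum _ fun j _ =>
    (vecMulVecCLM₂.continuous.comp_continuousOn (he j)).clm_apply (he j)).const_smul ((J : ℝ)⁻¹)

theorem hasDerivWithinAt_ecov_of_deviation {B : Matrix (Fin d) (Fin d) ℝ} (hB : B.IsSymm)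
    (hx : ∀ j, ContinuousOn (x j) (Ici 0))
    (hdev : ∀ j, ∀ t : ℝ, 0 ≤ t →
      x j t - emean (fun j' => x j' t) = x j 0 - emean (fun j' => x j' 0) +
        ∫ s in (0 : ℝ)..t,
          -(mulVecE (ecov (fun j' => x j' s) * B) (x j s - emean (fun j' => x j' s))))
    {t : ℝ} (ht : 0 ≤ t) :
    HasDerivWithinAt (fun s => ecov fun j => x j s)
      (-(2 : ℝ) • (ecov (fun j => x j t) * B * ecov (fun j => x j t))) (Ici t) t := by
  set C := fun s => ecov fun j => x j s
  set e := fun j s => x j s - emean fun j' => x j' s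
  have he_cont : ∀ j, ContinuousOn (e j) (Ici 0) := fun j => (hx j).sub (continuousOn_emean hx)
  have hde : ∀ j, HasDerivWithinAt (e j) (-(mulVecE (C t * B) (e j t))) (Ici t) t := fun j =>
    hasDerivWithinAt_Ici_of_primitive (((mulVecCLM₂.continuous.comp_continuousOn
      ((continuousOn_ecov hx).mul continuousOn_const)).clm_apply (he_cont j)).neg) (hdev j) ht
  have hsum := (HasDerivWithinAt.fun_sum (u := Finset.univ) fun j _ =>
    vecMulVecCLM₂.hasDerivWithinAt_of_bilinear (hde j) (hde j)).fun_const_smul ((J : ℝ)⁻¹)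
  refine hsum.congr_deriv ?_
  have hCB : (C t * B)ᵀ = B * C t := by
    rw [Matrix.transpose_mul, hB.eq, (ecov_isSymm _).eq]
  have hCt : (J : ℝ)⁻¹ • ∑ j, vecMulVecCLM₂ (e j t) (e j t) = C t := rfl
  simp only [ContinuousLinearMap.map_neg₂]
  simp only [map_neg, vecMulVecCLM₂_mulVecE_left, vecMulVecCLM₂_mulVecE_right, hCB,
    Finset.sum_add_distrib, Finset.sum_neg_distrib, ← Finset.sum_mul, ← Finset.mul_sum, smul_add,
    smul_neg]
  rw [← Matrix.smul_mul, ← Matrix.mul_smul, hCt, ← Matrix.mul_assoc, neg_smul, two_smul]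
  abel

theorem affine_mul_ecov_eq_one_of_deviation {B P₀ : Matrix (Fin d) (Fin d) ℝ} (hB : B.IsSymm)
    (hx : ∀ j, ContinuousOn (x j) (Ici 0))
    (hdev : ∀ j, ∀ t : ℝ, 0 ≤ t →
      x j t - emean (fun j' => x j' t) = x j 0 - emean (fun j' => x j' 0) +
        ∫ s in (0 : ℝ)..t,
          -(mulVecE (ecov (fun j' => x j' s) * B) (x j s - emean (fun j' => x j' s))))
    (hP₀ : P₀ * ecov (fun j => x j 0) = 1) {t : ℝ} (ht : 0 ≤ t) :
    (P₀ + (2 * t) • B) * ecov (fun j => x j t) = 1 := by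
  set C := fun s => ecov fun j => x j s
  have hC_cont : ContinuousOn C (Icc 0 t) := (continuousOn_ecov hx).mono Icc_subset_Ici_self
  have hP : Continuous fun s : ℝ => P₀ + (2 * s) • B := by fun_prop
  have hΔ := eq_zero_of_hasDerivWithinAt_mul_right (Δ := fun s => 1 - (P₀ + (2 * s) • B) * C s)
    (N := fun s => -(2 : ℝ) • (B * C s)) (continuousOn_const.sub (hP.continuousOn.mul hC_cont))
    (by fun_prop) ?_ (by simp [C, hP₀]) t ⟨ht, le_rfl⟩
  · exact (sub_eq_zero.mp hΔ).symm
  intro s hs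
  have hPs : HasDerivWithinAt (fun s : ℝ => P₀ + (2 * s) • B) ((2 : ℝ) • B) (Ici s) s := by
    simpa using
      (((hasDerivAt_id s).const_mul (2 : ℝ)).smul_const B).const_add P₀ |>.hasDerivWithinAt
  refine ((hPs.mul (hasDerivWithinAt_ecov_of_deviation hB hx hdev hs.1)).const_sub 1).congr_deriv ?_
  simp only [Matrix.smul_mul, Matrix.mul_smul, Matrix.sub_mul, Matrix.one_mul, Matrix.mul_assoc]
  module

end Ensemble

section SEKI

variable {d K : ℕ} (A : Matrix (Fin K) (Fin d) ℝ) (Γ : Matrix (Fin K) (Fin K) ℝ)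
  (C0 : Matrix (Fin d) (Fin d) ℝ) (y : EuclideanSpace ℝ (Fin K))

theorem isSymm_inv_of_posDef {n : ℕ} {M : Matrix (Fin n) (Fin n) ℝ} (hM : M.PosDef) :
    M⁻¹.IsSymm := by
  rw [Matrix.IsSymm, Matrix.transpose_nonsing_inv, ← conjTranspose_eq_transpose_of_trivial,
    hM.isHermitian.eq]

theorem isSymm_transpose_mul_mul_add {Q : Matrix (Fin K) (Fin K) ℝ}
    {S : Matrix (Fin d) (Fin d) ℝ} (hQ : Q.IsSymm) (hS : S.IsSymm) : (Aᵀ * Q * A + S).IsSymm := by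
  rw [Matrix.IsSymm, Matrix.transpose_add, Matrix.transpose_mul, Matrix.transpose_mul,
    Matrix.transpose_transpose, hQ.eq, hS.eq, Matrix.mul_assoc]

def sekiDrift (C : Matrix (Fin d) (Fin d) ℝ) (m w : EuclideanSpace ℝ (Fin d)) :
    EuclideanSpace ℝ (Fin d) :=
  -(mulVecE C (mulVecE (Aᵀ * Γ⁻¹) (mulVecE A m - y) + mulVecE C0⁻¹ m + w))

theorem sekiDrift_sub_sekiDrift (C : Matrix (Fin d) (Fin d) ℝ)
    (m m' w w' : EuclideanSpace ℝ (Fin d)) :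
    sekiDrift A Γ C0 y C m w - sekiDrift A Γ C0 y C m' w' =
      -(mulVecE C (mulVecE (Aᵀ * Γ⁻¹ * A + C0⁻¹) (m - m') + (w - w'))) := by
  simp only [sekiDrift, add_mulVecE, ← mulVecE_mulVecE, mulVecE_add, mulVecE_sub]
  abel

theorem intervalIntegrable_sekiDrift {a b : ℝ} {C : ℝ → Matrix (Fin d) (Fin d) ℝ}
    {m w : ℝ → EuclideanSpace ℝ (Fin d)} (hC : ContinuousOn C (uIcc a b))
    (hm : ContinuousOn m (uIcc a b)) (hw : IntervalIntegrable w volume a b) :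
    IntervalIntegrable (fun s => sekiDrift A Γ C0 y (C s) (m s) (w s)) volume a b := by
  have hMm : ∀ {k : ℕ} (M : Matrix (Fin k) (Fin d) ℝ),
      ContinuousOn (fun s => mulVecE M (m s)) (uIcc a b) :=
    fun M => (mulVecCLM₂ M).continuous.comp_continuousOn hm
  have hV : ContinuousOn
      (fun s => mulVecE (Aᵀ * Γ⁻¹) (mulVecE A (m s) - y) + mulVecE C0⁻¹ (m s)) (uIcc a b) :=
    ((mulVecCLM₂ (Aᵀ * Γ⁻¹)).continuous.comp_continuousOn
      ((hMm A).sub continuousOn_const)).add (hMm C0⁻¹)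
  exact (mulVecCLM₂.intervalIntegrable_of_continuousOn_left hC
    (hV.intervalIntegrable.add hw)).neg

theorem sub_eq_integral_of_sekiDrift {C C' : ℝ → Matrix (Fin d) (Fin d) ℝ}
    {m m' w w' : ℝ → EuclideanSpace ℝ (Fin d)} (hC : ContinuousOn C (Ici 0))
    (hCC' : ∀ s, 0 ≤ s → C s = C' s) (hm : ContinuousOn m (Ici 0))
    (hm' : ContinuousOn m' (Ici 0)) (hw : ∀ t, 0 ≤ t → IntervalIntegrable w volume 0 t)
    (hw' : ∀ t, 0 ≤ t → IntervalIntegrable w' volume 0 t)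
    (hmeq : ∀ t, 0 ≤ t → m t = m 0 + ∫ s in (0 : ℝ)..t, sekiDrift A Γ C0 y (C s) (m s) (w s))
    (hm'eq : ∀ t, 0 ≤ t →
      m' t = m' 0 + ∫ s in (0 : ℝ)..t, sekiDrift A Γ C0 y (C' s) (m' s) (w' s))
    {t : ℝ} (ht : 0 ≤ t) :
    m t - m' t = m 0 - m' 0 + ∫ s in (0 : ℝ)..t,
      -(mulVecE (C s) (mulVecE (Aᵀ * Γ⁻¹ * A + C0⁻¹) (m s - m' s) + (w s - w' s))) := by
  have hsub : uIcc 0 t ⊆ Ici 0 := by rw [uIcc_of_le ht]; exact Icc_subset_Ici_self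
  have hC' : ∫ s in (0 : ℝ)..t, sekiDrift A Γ C0 y (C' s) (m' s) (w' s) =
      ∫ s in (0 : ℝ)..t, sekiDrift A Γ C0 y (C s) (m' s) (w' s) :=
    integral_congr fun s hs => by rw [hCC' s (hsub hs)]
  rw [hmeq t ht, hm'eq t ht, hC', add_sub_add_comm, ← integral_sub
    (intervalIntegrable_sekiDrift A Γ C0 y (hC.mono hsub) (hm.mono hsub) (hw t ht))
    (intervalIntegrable_sekiDrift A Γ C0 y (hC.mono hsub) (hm'.mono hsub) (hw' t ht))]
  simp only [sekiDrift_sub_sekiDrift]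

theorem inner_sub_nonneg_of_mem_subderiv {R : EuclideanSpace ℝ (Fin d) → ℝ}
    {ξ η p q : EuclideanSpace ℝ (Fin d)} (hξ : ξ ∈ subderiv R p) (hη : η ∈ subderiv R q) :
    0 ≤ ⟪ξ - η, p - q⟫ := by
  have hpq := hξ q
  have hqp := hη p
  rw [← neg_sub p q, inner_neg_right] at hpq
  rw [inner_sub_left]
  linarith

end SEKI

end

theorem stmt2_general {d K J : ℕ} (A : Matrix (Fin K) (Fin d) ℝ) (Γ : Matrix (Fin K) (Fin K) ℝ)
    (hΓ : Γ.PosDef) (C0 : Matrix (Fin d) (Fin d) ℝ) (hC0 : C0.PosDef)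
    (y : EuclideanSpace ℝ (Fin K))
    (R : EuclideanSpace ℝ (Fin d) → ℝ)
    (x z : Fin J → ℝ → EuclideanSpace ℝ (Fin d))
    (hx : IsSEKISolInf A Γ C0 y R x) (hz : IsSEKISolInf A Γ C0 y R z)
    (hcov0 : ecov (fun j => x j 0) = ecov (fun j => z j 0))
    (hpos0 : (ecov (fun j => x j 0)).PosDef) :
    ∀ t : ℝ, 0 ≤ t →
      ecov (fun j => x j t) = ecov (fun j => z j t) ∧
      Real.sqrt (wnormSq (ecov (fun j => x j t))
          (emean (fun j => x j t) - emean (fun j => z j t))) ≤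
        Real.sqrt (wnormSq (ecov (fun j => x j 0))
          (emean (fun j => x j 0) - emean (fun j => z j 0))) := by
  obtain ⟨hx_cont, wx, hwx, hwx_mem, hx_mean, hx_dev⟩ := hx
  obtain ⟨hz_cont, wz, hwz, hwz_mem, hz_mean, hz_dev⟩ := hz
  have hB := isSymm_transpose_mul_mul_add A (isSymm_inv_of_posDef hΓ) (isSymm_inv_of_posDef hC0)
  have hP₀ : (ecov fun j => x j 0)⁻¹ * ecov (fun j => x j 0) = 1 :=
    Matrix.nonsing_inv_mul _ ((Matrix.isUnit_iff_isUnit_det _).mp hpos0.isUnit)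
  have hPx := fun s (hs : 0 ≤ s) => affine_mul_ecov_eq_one_of_deviation hB hx_cont hx_dev hP₀ hs
  have hPz := fun s (hs : 0 ≤ s) =>
    affine_mul_ecov_eq_one_of_deviation hB hz_cont hz_dev (by rwa [← hcov0]) hs
  have hcov : ∀ s, 0 ≤ s → ecov (fun j => x j s) = ecov (fun j => z j s) := fun s hs =>
    (Matrix.inv_eq_right_inv (hPx s hs)).symm.trans (Matrix.inv_eq_right_inv (hPz s hs))
  intro t ht
  refine ⟨hcov t ht, Real.sqrt_le_sqrt ?_⟩
  refine wnormSq_le_of_flow (isSymm_inv_of_posDef hpos0) hB (continuousOn_ecov hx_cont)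
    (fun s => ecov_isSymm _) hPx ((continuousOn_emean hx_cont).sub (continuousOn_emean hz_cont))
    (fun t ht => sub_eq_integral_of_sekiDrift A Γ C0 y (continuousOn_ecov hx_cont) hcov
      (continuousOn_emean hx_cont) (continuousOn_emean hz_cont) hwx hwz hx_mean hz_mean ht) ?_ ht
    ((hwx t ht).sub (hwz t ht))
  filter_upwards [hwx_mem, hwz_mem] with s hxs hzs using inner_sub_nonneg_of_mem_subderiv hxs hzs

/-- two solutions of the linear SEKI flow whose initial ensembles have equal
positive definite empirical covariances have identical covariances for all `t ≥ 0`, and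
their ensemble means satisfy the contraction estimate
`‖x̄(t) - z̄(t)‖_{C(t)} ≤ ‖x̄₀ - z̄₀‖_{C(0)}`. -/
theorem stmt2 {d K J : ℕ} (A : Matrix (Fin K) (Fin d) ℝ) (Γ : Matrix (Fin K) (Fin K) ℝ)
    (hΓ : Γ.PosDef) (C0 : Matrix (Fin d) (Fin d) ℝ) (hC0 : C0.PosDef)
    (y : EuclideanSpace ℝ (Fin K))
    (R : EuclideanSpace ℝ (Fin d) → ℝ) (hRconv : ConvexOn ℝ Set.univ R)
    (hRlsc : LowerSemicontinuous R) (hRbdd : BddBelow (Set.range R))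
    (x z : Fin J → ℝ → EuclideanSpace ℝ (Fin d))
    (hx : IsSEKISolInf A Γ C0 y R x) (hz : IsSEKISolInf A Γ C0 y R z)
    (hcov0 : ecov (fun j => x j 0) = ecov (fun j => z j 0))
    (hpos0 : (ecov (fun j => x j 0)).PosDef) :
    ∀ t : ℝ, 0 ≤ t →
      ecov (fun j => x j t) = ecov (fun j => z j t) ∧
      Real.sqrt (wnormSq (ecov (fun j => x j t))
          (emean (fun j => x j t) - emean (fun j => z j t))) ≤
        Real.sqrt (wnormSq (ecov (fun j => x j 0))
          (emean (fun j => x j 0) - emean (fun j => z j 0))) :=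
  stmt2_general A Γ hΓ C0 hC0 y R x z hx hz hcov0 hpos0
end

section
/- Let S ∈ ℝ^{d×d} be symmetric with μI ⪯ S ⪯ LI for 0 < μ ≤ L, let e^{(1)},…,e^{(J)} ∈ ℝ^d with C = (1/J)∑_j e^{(j)}(e^{(j)})ᵀ and E = (1/J)∑_j ‖e^{(j)}‖², and let h > 0. Define e'^{(j)} = e^{(j)} − hCSe^{(j)} and E' = (1/J)∑_j ‖e'^{(j)}‖². Then E' ≤ E − (2hμ/J)E² + h²L²E³. -/
open Matrix MeasureTheory RealInnerProductSpace Filter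

/-!
Expanding the square, `E' = E - 2h·tr(CSC) + h²·(1/J)∑ⱼ ‖CSe⁽ʲ⁾‖²`, because the ensemble mean of
`⟨e, Me⟩` is `tr(MC)`. Conjugating `S - μI ⪰ 0` by `C` gives `tr(CSC) ≥ μ·tr(C²)`, and
`tr(C²) = J⁻²∑_{j,k} ⟨e⁽ʲ⁾, e⁽ᵏ⁾⟩²` lies between `E²/J` (keep the diagonal, then Cauchy–Schwarz
over `j`) and `E²` (Cauchy–Schwarz in every term). For the quadratic term,
`‖Mv‖² ≤ tr(MMᵀ)‖v‖²` and `‖Sv‖ ≤ L‖v‖`; the latter comes from `0 ⪯ S ⪯ LI` through the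
Cauchy–Schwarz inequality of the semi-inner product `⟨·, S·⟩` applied to `v` and `Sv`.
-/

namespace Matrix

variable {m n : Type*} [Fintype n]

lemma dotProduct_mulVec_sq_le_of_posSemidef {M : Matrix n n ℝ} (hM : M.PosSemidef)
    (x y : n → ℝ) : (x ⬝ᵥ M *ᵥ y) ^ 2 ≤ (x ⬝ᵥ M *ᵥ x) * (y ⬝ᵥ M *ᵥ y) := by
  let := M.toSeminormedAddCommGroup hM
  let := M.toInnerProductSpace hM
  have h := real_inner_mul_inner_self_le x y
  -- in this structure `⟪x, y⟫` is by definition `(M *ᵥ y) ⬝ᵥ star x`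
  change (M *ᵥ y) ⬝ᵥ star x * ((M *ᵥ y) ⬝ᵥ star x)
    ≤ (M *ᵥ x ⬝ᵥ star x) * ((M *ᵥ y) ⬝ᵥ star y) at h
  simpa only [star_trivial, dotProduct_comm _ x, dotProduct_comm _ y, sq] using h

lemma dotProduct_mulVec_le_of_posSemidef_sub [DecidableEq n] {S : Matrix n n ℝ} {L : ℝ}
    (hSL : (L • 1 - S).PosSemidef) (x : n → ℝ) : x ⬝ᵥ S *ᵥ x ≤ L * (x ⬝ᵥ x) := by
  have := hSL.dotProduct_mulVec_nonneg x
  simp only [star_trivial, sub_mulVec, smul_mulVec, one_mulVec, dotProduct_sub, dotProduct_smul,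
    smul_eq_mul] at this
  linarith

lemma mulVec_dotProduct_mulVec_le_of_posSemidef [DecidableEq n] {S : Matrix n n ℝ} {L : ℝ}
    (hS : S.PosSemidef) (hSL : (L • 1 - S).PosSemidef) (x : n → ℝ) :
    S *ᵥ x ⬝ᵥ S *ᵥ x ≤ L ^ 2 * (x ⬝ᵥ x) := by
  set y := S *ᵥ x
  have hxy : x ⬝ᵥ S *ᵥ y = y ⬝ᵥ y := by
    rw [dotProduct_mulVec, ← mulVec_transpose, ← conjTranspose_eq_transpose_of_trivial,
      hS.isHermitian.eq]
  have hcs := dotProduct_mulVec_sq_le_of_posSemidef hS x y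
  rw [hxy] at hcs
  have hx := dotProduct_mulVec_le_of_posSemidef_sub hSL x
  have hy := dotProduct_mulVec_le_of_posSemidef_sub hSL y
  have hSx : 0 ≤ x ⬝ᵥ S *ᵥ x := by simpa using hS.dotProduct_mulVec_nonneg x
  have hSy : 0 ≤ y ⬝ᵥ S *ᵥ y := by simpa using hS.dotProduct_mulVec_nonneg y
  have hyy : (y ⬝ᵥ y) ^ 2 ≤ (L * (x ⬝ᵥ x)) * (L * (y ⬝ᵥ y)) :=
    hcs.trans (mul_le_mul hx hy hSy (hSx.trans hx))
  rcases (show 0 ≤ y ⬝ᵥ y from dotProduct_self_star_nonneg y).eq_or_lt with hy0 | hy0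
  · rw [← hy0]
    exact mul_nonneg (sq_nonneg L) (dotProduct_self_star_nonneg x)
  · nlinarith

lemma mulVec_dotProduct_mulVec_le_trace [Fintype m] (M : Matrix m n ℝ) (v : n → ℝ) :
    M *ᵥ v ⬝ᵥ M *ᵥ v ≤ trace (M * Mᵀ) * (v ⬝ᵥ v) := by
  have htr : trace (M * Mᵀ) = ∑ i, M i ⬝ᵥ M i := by simp [trace, mul_apply, dotProduct]
  rw [htr, Finset.sum_mul]
  refine Finset.sum_le_sum fun i _ => ?_
  simpa [mulVec, dotProduct, sq] using Finset.sum_mul_sq_le_sq_mul_sq Finset.univ (M i) v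

lemma mul_trace_mul_self_le_trace_mul_mul [DecidableEq n] {S C : Matrix n n ℝ} {μ : ℝ}
    (hS : (S - μ • 1).PosSemidef) (hC : Cᵀ = C) : μ * trace (C * C) ≤ trace (C * S * C) := by
  have h := (hS.mul_mul_conjTranspose_same C).trace_nonneg
  rw [conjTranspose_eq_transpose_of_trivial, hC, Matrix.mul_sub, Matrix.sub_mul, trace_sub,
    Matrix.mul_smul, Matrix.mul_one, Matrix.smul_mul, trace_smul, smul_eq_mul] at h
  linarith

end Matrix

section Ensemble

variable {ι n : Type*} [Fintype ι] [Fintype n]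

noncomputable def secondMoment (x : ι → n → ℝ) : Matrix n n ℝ :=
  (Fintype.card ι : ℝ)⁻¹ • ∑ j, vecMulVec (x j) (x j)

noncomputable def meanSqNorm (x : ι → n → ℝ) : ℝ :=
  (Fintype.card ι : ℝ)⁻¹ * ∑ j, x j ⬝ᵥ x j

noncomputable def ensembleStep (S : Matrix n n ℝ) (h : ℝ) (x : ι → n → ℝ) : ι → n → ℝ :=
  fun j => x j - h • (secondMoment x * S) *ᵥ x j

omit [Fintype n] in
lemma secondMoment_transpose (x : ι → n → ℝ) : (secondMoment x)ᵀ = secondMoment x := by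
  simp [secondMoment, transpose_sum, transpose_vecMulVec]

lemma trace_mul_secondMoment (M : Matrix n n ℝ) (x : ι → n → ℝ) :
    trace (M * secondMoment x) = (Fintype.card ι : ℝ)⁻¹ * ∑ j, x j ⬝ᵥ M *ᵥ x j := by
  simp [secondMoment, Matrix.mul_sum, trace_sum, mul_vecMulVec, dotProduct_comm]

lemma trace_secondMoment_mul_self (x : ι → n → ℝ) :
    trace (secondMoment x * secondMoment x)
      = (Fintype.card ι : ℝ)⁻¹ ^ 2 * ∑ j, ∑ k, (x j ⬝ᵥ x k) ^ 2 := by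
  rw [trace_mul_secondMoment]
  simp only [secondMoment, smul_mulVec, sum_mulVec, vecMulVec_mulVec, op_smul_eq_smul,
    dotProduct_smul, dotProduct_sum, smul_eq_mul, Finset.mul_sum]
  refine Finset.sum_congr rfl fun j _ => Finset.sum_congr rfl fun k _ => ?_
  rw [dotProduct_comm (x k)]
  ring

lemma sum_sq_dotProduct_le (x : ι → n → ℝ) :
    ∑ j, ∑ k, (x j ⬝ᵥ x k) ^ 2 ≤ (∑ j, x j ⬝ᵥ x j) ^ 2 := by
  rw [sq, Finset.sum_mul_sum]
  refine Finset.sum_le_sum fun j _ => Finset.sum_le_sum fun k _ => ?_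
  simpa [dotProduct, sq] using Finset.sum_mul_sq_le_sq_mul_sq Finset.univ (x j) (x k)

lemma sq_sum_le_card_mul_sum_sq_dotProduct (x : ι → n → ℝ) :
    (∑ j, x j ⬝ᵥ x j) ^ 2 ≤ Fintype.card ι * ∑ j, ∑ k, (x j ⬝ᵥ x k) ^ 2 := by
  calc (∑ j, x j ⬝ᵥ x j) ^ 2 ≤ Fintype.card ι * ∑ j, (x j ⬝ᵥ x j) ^ 2 := by
        simpa using sq_sum_le_card_mul_sum_sq (s := Finset.univ) (f := fun j => x j ⬝ᵥ x j)
    _ ≤ Fintype.card ι * ∑ j, ∑ k, (x j ⬝ᵥ x k) ^ 2 := by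
        gcongr with j
        exact Finset.single_le_sum (f := fun k => (x j ⬝ᵥ x k) ^ 2) (fun _ _ => sq_nonneg _)
          (Finset.mem_univ j)

lemma trace_secondMoment_mul_self_le (x : ι → n → ℝ) :
    trace (secondMoment x * secondMoment x) ≤ meanSqNorm x ^ 2 := by
  rw [trace_secondMoment_mul_self, meanSqNorm, mul_pow]
  gcongr
  exact sum_sq_dotProduct_le x

lemma sq_meanSqNorm_le_card_mul_trace (x : ι → n → ℝ) :
    meanSqNorm x ^ 2 ≤ Fintype.card ι * trace (secondMoment x * secondMoment x) := by
  rw [trace_secondMoment_mul_self, meanSqNorm, mul_pow, mul_left_comm]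
  gcongr
  exact sq_sum_le_card_mul_sum_sq_dotProduct x

lemma meanSqNorm_nonneg (x : ι → n → ℝ) : 0 ≤ meanSqNorm x :=
  mul_nonneg (by positivity) (Finset.sum_nonneg fun j _ => dotProduct_self_star_nonneg (x j))

lemma meanSqNorm_le_mul_meanSqNorm {x y : ι → n → ℝ} {K : ℝ}
    (hxy : ∀ j, y j ⬝ᵥ y j ≤ K * (x j ⬝ᵥ x j)) : meanSqNorm y ≤ K * meanSqNorm x := by
  calc meanSqNorm y ≤ (Fintype.card ι : ℝ)⁻¹ * ∑ j, K * (x j ⬝ᵥ x j) := by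
        unfold meanSqNorm
        gcongr with j
        exact hxy j
    _ = K * meanSqNorm x := by rw [meanSqNorm, ← Finset.mul_sum]; ring

lemma meanSqNorm_sub_smul (x y : ι → n → ℝ) (h : ℝ) :
    meanSqNorm (fun j => x j - h • y j)
      = meanSqNorm x - 2 * h * ((Fintype.card ι : ℝ)⁻¹ * ∑ j, x j ⬝ᵥ y j)
        + h ^ 2 * meanSqNorm y := by
  simp only [meanSqNorm, sub_dotProduct, dotProduct_sub, smul_dotProduct, dotProduct_smul,
    smul_eq_mul, dotProduct_comm (y _) (x _), Finset.sum_sub_distrib, ← Finset.mul_sum]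
  ring

theorem meanSqNorm_ensembleStep_le [DecidableEq n] (x : ι → n → ℝ) {S : Matrix n n ℝ}
    {μ L h : ℝ} (hμ : 0 ≤ μ) (hh : 0 ≤ h) (hSl : (S - μ • 1).PosSemidef)
    (hSu : (L • 1 - S).PosSemidef) :
    meanSqNorm (ensembleStep S h x)
      ≤ meanSqNorm x - 2 * h * μ / Fintype.card ι * meanSqNorm x ^ 2
        + h ^ 2 * L ^ 2 * meanSqNorm x ^ 3 := by
  set C := secondMoment x
  set E := meanSqNorm x
  have hCt : Cᵀ = C := secondMoment_transpose x
  have hS : S.PosSemidef := by simpa using hSl.add (PosSemidef.one.smul hμ)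
  have hF : 0 ≤ trace (C * C) := by rw [trace_secondMoment_mul_self]; positivity
  have drift : μ / Fintype.card ι * E ^ 2 ≤ trace (C * S * C) :=
    calc μ / Fintype.card ι * E ^ 2 = μ * E ^ 2 / Fintype.card ι := by ring
      _ ≤ μ * trace (C * C) := div_le_of_le_mul₀ (Nat.cast_nonneg _) (mul_nonneg hμ hF)
            ((mul_le_mul_of_nonneg_left (sq_meanSqNorm_le_card_mul_trace x) hμ).trans_eq
              (by ring))
      _ ≤ trace (C * S * C) := mul_trace_mul_self_le_trace_mul_mul hSl hCt
  have diffusion : meanSqNorm (fun j => (C * S) *ᵥ x j) ≤ L ^ 2 * E ^ 3 :=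
    calc meanSqNorm (fun j => (C * S) *ᵥ x j) ≤ trace (C * C) * L ^ 2 * E := by
          refine meanSqNorm_le_mul_meanSqNorm fun j => ?_
          calc (C * S) *ᵥ x j ⬝ᵥ (C * S) *ᵥ x j
              ≤ trace (C * Cᵀ) * (S *ᵥ x j ⬝ᵥ S *ᵥ x j) := by
                rw [← mulVec_mulVec]
                exact mulVec_dotProduct_mulVec_le_trace C _
            _ ≤ trace (C * C) * L ^ 2 * (x j ⬝ᵥ x j) := by
                rw [hCt, mul_assoc]
                gcongr
                exact mulVec_dotProduct_mulVec_le_of_posSemidef hS hSu (x j)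
      _ ≤ E ^ 2 * L ^ 2 * E := by
          gcongr
          · exact meanSqNorm_nonneg x
          · exact trace_secondMoment_mul_self_le x
      _ = L ^ 2 * E ^ 3 := by ring
  unfold ensembleStep
  rw [meanSqNorm_sub_smul, ← trace_mul_secondMoment]
  calc E - 2 * h * trace (C * S * C) + h ^ 2 * meanSqNorm (fun j => (C * S) *ᵥ x j)
      ≤ E - 2 * h * (μ / Fintype.card ι * E ^ 2) + h ^ 2 * (L ^ 2 * E ^ 3) := by gcongr
    _ = _ := by ring

end Ensemble

lemma EuclideanSpace.real_norm_sq_eq_dotProduct {n : Type*} [Fintype n]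
    (v : EuclideanSpace ℝ n) : ‖v‖ ^ 2 = v.ofLp ⬝ᵥ v.ofLp := by
  rw [EuclideanSpace.real_norm_sq_eq]
  simp only [dotProduct, sq]

lemma ofLp_mulVecE {m n : ℕ} (M : Matrix (Fin m) (Fin n) ℝ) (v : EuclideanSpace ℝ (Fin n)) :
    (mulVecE M v).ofLp = M *ᵥ v.ofLp :=
  rfl

theorem stmt14_general {d J : ℕ} (S : Matrix (Fin d) (Fin d) ℝ)
    (μ L : ℝ) (hμ : 0 < μ)
    (hSl : (S - μ • 1).PosSemidef)
    (hSu : ((L • 1 : Matrix (Fin d) (Fin d) ℝ) - S).PosSemidef)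
    (e e' : Fin J → EuclideanSpace ℝ (Fin d)) (h : ℝ) (hh : 0 < h)
    (C : Matrix (Fin d) (Fin d) ℝ)
    (hC : C = (J : ℝ)⁻¹ • ∑ j, vecMulVec (fun i => e j i) (fun i => e j i))
    (En En' : ℝ) (hEn : En = (J : ℝ)⁻¹ * ∑ j, ‖e j‖ ^ 2)
    (he' : ∀ j, e' j = e j - h • mulVecE (C * S) (e j))
    (hEn' : En' = (J : ℝ)⁻¹ * ∑ j, ‖e' j‖ ^ 2) :
    En' ≤ En - (2 * h * μ / J) * En ^ 2 + h ^ 2 * L ^ 2 * En ^ 3 := by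
  set x : Fin J → Fin d → ℝ := fun j => (e j).ofLp
  have hCx : C = secondMoment x := by rw [hC, secondMoment, Fintype.card_fin]
  have hEx : En = meanSqNorm x := by
    simp only [hEn, meanSqNorm, EuclideanSpace.real_norm_sq_eq_dotProduct, Fintype.card_fin, x]
  have hEx' : En' = meanSqNorm (ensembleStep S h x) := by
    simp only [hEn', meanSqNorm, ensembleStep, EuclideanSpace.real_norm_sq_eq_dotProduct,
      Fintype.card_fin, he', WithLp.ofLp_sub, WithLp.ofLp_smul, ofLp_mulVecE, hCx, x]
  simpa only [hEx, hEx', Fintype.card_fin] using meanSqNorm_ensembleStep_le x hμ.le hh.le hSl hSu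

/-- one-step ensemble-spread inequality
`E' ≤ E - (2hμ/J)E² + h²L²E³`. -/
theorem stmt14 {d J : ℕ} (hJ : 0 < J) (S : Matrix (Fin d) (Fin d) ℝ) (hS : S.IsSymm)
    (μ L : ℝ) (hμ : 0 < μ) (hμL : μ ≤ L)
    (hSl : (S - μ • 1).PosSemidef)
    (hSu : ((L • 1 : Matrix (Fin d) (Fin d) ℝ) - S).PosSemidef)
    (e e' : Fin J → EuclideanSpace ℝ (Fin d)) (h : ℝ) (hh : 0 < h)
    (C : Matrix (Fin d) (Fin d) ℝ)
    (hC : C = (J : ℝ)⁻¹ • ∑ j, vecMulVec (fun i => e j i) (fun i => e j i))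
    (En En' : ℝ) (hEn : En = (J : ℝ)⁻¹ * ∑ j, ‖e j‖ ^ 2)
    (he' : ∀ j, e' j = e j - h • mulVecE (C * S) (e j))
    (hEn' : En' = (J : ℝ)⁻¹ * ∑ j, ‖e' j‖ ^ 2) :
    En' ≤ En - (2 * h * μ / J) * En ^ 2 + h ^ 2 * L ^ 2 * En ^ 3 :=
  stmt14_general S μ L hμ hSl hSu e e' h hh C hC En En' hEn he' hEn'
end
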